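/- Let 𝒪 = O + d with d ~ N(0, Σ), O ⊆ R^n convex, and let S_{ε₁} = O + D_{ε₁} and S_{ε₂} = O + D'_{ε₂} with ε₂ ≤ ε₁, where D'_{ε₂} is the half-ellipsoid in direction n̂. Then P(𝒪 ⊆ S_{ε₁} ∪ S_{ε₂}) ≥ 1 − (ε₁ + ε₂)/2. -/

import Mathlib

open scoped ENNReal

open Pointwise

open MeasureTheory ProbabilityTheory Matrix Set

noncomputable def mvGaussian {n : ℕ} (S : Matrix (Fin n) (Fin n) ℝ) :
    Measure (Fin n → ℝ) :=
  volume.withDensity fun x => ENNReal.ofReal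
    (Real.sqrt (((2 * Real.pi) ^ n * S.det)⁻¹) * Real.exp (-(x ⬝ᵥ S⁻¹.mulVec x) / 2))

noncomputable def quadForm {n : ℕ} (S : Matrix (Fin n) (Fin n) ℝ) (x : Fin n → ℝ) : ℝ :=
  x ⬝ᵥ S⁻¹.mulVec x

/-- CDF of the gamma distribution (removed from Mathlib; old definition restored) -/
noncomputable def gammaCDFReal (a r : ℝ) : StieltjesFunction ℝ :=
  cdf (gammaMeasure a r)

lemma gammaCDFReal_eq_integral {a r : ℝ} (ha : 0 < a) (hr : 0 < r) (x : ℝ) :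
    gammaCDFReal a r x = ∫ x in Iic x, gammaPDFReal a r x := by
  have : IsProbabilityMeasure (gammaMeasure a r) := isProbabilityMeasure_gammaMeasure ha hr
  rw [gammaCDFReal, cdf_eq_real, measureReal_def, gammaMeasure, withDensity_apply _ measurableSet_Iic]
  refine (integral_eq_lintegral_of_nonneg_ae ?_ ?_).symm
  · exact ae_of_all _ fun b => by simp only [Pi.zero_apply, gammaPDFReal_nonneg ha hr]
  · exact (measurable_gammaPDFReal a r).aestronglyMeasurable.restrict

noncomputable def chiSqCDF (n : ℕ) (t : ℝ) : ℝ := gammaCDFReal ((n : ℝ) / 2) (1 / 2) t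

noncomputable def chiSqPDF (n : ℕ) (t : ℝ) : ℝ := gammaPDFReal ((n : ℝ) / 2) (1 / 2) t

lemma continuous_quadForm {n : ℕ} (S : Matrix (Fin n) (Fin n) ℝ) :
    Continuous (quadForm S) := by
  unfold quadForm dotProduct Matrix.mulVec
  exact continuous_finset_sum _ fun i _ => (continuous_apply i).mul (by
    exact continuous_finset_sum _ fun j _ => continuous_const.mul (continuous_apply j))

lemma quadForm_neg {n : ℕ} (S : Matrix (Fin n) (Fin n) ℝ) (x : Fin n → ℝ) :
    quadForm S (-x) = quadForm S x := by
  simp [quadForm, Matrix.mulVec_neg, dotProduct_neg, neg_dotProduct]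

lemma map_neg_volume_pi {n : ℕ} :
    Measure.map (fun x : Fin n → ℝ => -x) volume = volume := by
  have h : Matrix.det (-1 : Matrix (Fin n) (Fin n) ℝ) ≠ 0 := by
    simp [Matrix.det_neg]
  have := Real.map_matrix_volume_pi_eq_smul_volume_pi h
  have heq : (Matrix.toLin' (-1 : Matrix (Fin n) (Fin n) ℝ) : (Fin n → ℝ) → Fin n → ℝ)
      = fun x => -x := by
    ext x i
    simp [Matrix.toLin'_apply, Matrix.neg_mulVec]
  rw [heq] at this
  rw [this]
  norm_num [Matrix.det_neg, abs_inv, abs_pow]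

lemma continuous_dotProd {n : ℕ} (v : Fin n → ℝ) : Continuous (fun x : Fin n → ℝ => v ⬝ᵥ x) := by
  unfold dotProduct
  exact continuous_finset_sum _ fun i _ => continuous_const.mul (continuous_apply i)

lemma measurable_gaussDensity {n : ℕ} (S : Matrix (Fin n) (Fin n) ℝ) (c : ℝ) :
    Measurable (fun x : Fin n → ℝ => ENNReal.ofReal (c * Real.exp (-(quadForm S x) / 2))) :=
  ENNReal.measurable_ofReal.comp ((continuous_const.mul
    (Real.continuous_exp.comp (((continuous_quadForm S).neg).div_const 2))).measurable)

lemma mvGaussian_apply {n : ℕ} (S : Matrix (Fin n) (Fin n) ℝ) {A : Set (Fin n → ℝ)}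
    (hA : MeasurableSet A) :
    mvGaussian S A = ∫⁻ x in A, ENNReal.ofReal
      (Real.sqrt (((2 * Real.pi) ^ n * S.det)⁻¹) * Real.exp (-(quadForm S x) / 2)) ∂volume := by
  rw [mvGaussian, withDensity_apply _ hA]; rfl

lemma mvGaussian_neg_preimage {n : ℕ} (S : Matrix (Fin n) (Fin n) ℝ) {A : Set (Fin n → ℝ)}
    (hA : MeasurableSet A) :
    mvGaussian S ((fun x => -x) ⁻¹' A) = mvGaussian S A := by
  set c := Real.sqrt (((2 * Real.pi) ^ n * S.det)⁻¹)
  rw [mvGaussian_apply S (hA.preimage measurable_neg), mvGaussian_apply S hA]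
  calc ∫⁻ x in (fun x => -x) ⁻¹' A, ENNReal.ofReal (c * Real.exp (-(quadForm S x) / 2)) ∂volume
      = ∫⁻ x in (fun x => -x) ⁻¹' A,
          ENNReal.ofReal (c * Real.exp (-(quadForm S (-x)) / 2)) ∂volume := by
        simp_rw [quadForm_neg]
    _ = ∫⁻ y in A, ENNReal.ofReal (c * Real.exp (-(quadForm S y) / 2))
          ∂(Measure.map (fun x : Fin n → ℝ => -x) volume) :=
        (setLIntegral_map hA (measurable_gaussDensity S c) measurable_neg).symm
    _ = _ := by rw [map_neg_volume_pi]

lemma mvGaussian_hyperplane {n : ℕ} (S : Matrix (Fin n) (Fin n) ℝ) (nh : Fin n → ℝ)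
    (hnh : nh ≠ 0) : mvGaussian S {x | nh ⬝ᵥ x = 0} = 0 := by
  have hmeas : MeasurableSet {x : Fin n → ℝ | nh ⬝ᵥ x = 0} :=
    measurableSet_eq_fun (continuous_dotProd nh).measurable measurable_const
  have hvol : volume {x : Fin n → ℝ | nh ⬝ᵥ x = 0} = 0 := by
    let f : (Fin n → ℝ) →ₗ[ℝ] ℝ :=
      { toFun := fun x => nh ⬝ᵥ x
        map_add' := fun a b => dotProduct_add _ _ _
        map_smul' := fun c a => by simp [dotProduct_smul] }
    have hset : {x : Fin n → ℝ | nh ⬝ᵥ x = 0} = (LinearMap.ker f : Set (Fin n → ℝ)) := rfl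
    rw [hset]
    refine Measure.addHaar_submodule _ _ ?_
    intro htop
    have : nh ∈ LinearMap.ker f := htop ▸ Submodule.mem_top
    exact hnh (dotProduct_self_eq_zero.mp this)
  rw [mvGaussian, withDensity_apply _ hmeas, Measure.restrict_eq_zero.mpr hvol,
    lintegral_zero_measure]

lemma continuous_selfDot {n : ℕ} : Continuous (fun y : Fin n → ℝ => y ⬝ᵥ y) := by
  unfold dotProduct
  exact continuous_finset_sum _ fun i _ => (continuous_apply i).mul (continuous_apply i)

open scoped MatrixOrder in
lemma gauss_change {n : ℕ} {S : Matrix (Fin n) (Fin n) ℝ} (hS : S.PosDef) (t : ℝ) :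
    mvGaussian S {x | quadForm S x ≤ t}
      = ∫⁻ y in {y : Fin n → ℝ | y ⬝ᵥ y ≤ t},
          ENNReal.ofReal (Real.sqrt (((2 * Real.pi) ^ n)⁻¹) * Real.exp (-(y ⬝ᵥ y) / 2))
          ∂volume := by
  have hSdet : 0 < S.det := hS.det_pos
  set B := CFC.sqrt S⁻¹ with hBdef
  have hBsd : B.PosSemidef := (CFC.sqrt_nonneg S⁻¹).posSemidef
  have hBB : B * B = S⁻¹ := CFC.sqrt_mul_sqrt_self S⁻¹ (hS.inv).posSemidef.nonneg
  have hBsymm : Bᵀ = B := hBsd.1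
  -- determinant of B
  have hdetB_nonneg : 0 ≤ B.det := by
    rw [hBsd.1.det_eq_prod_eigenvalues]
    exact Finset.prod_nonneg fun i _ => hBsd.eigenvalues_nonneg i
  have hdetB_sq : B.det ^ 2 = (S.det)⁻¹ := by
    have := congrArg Matrix.det hBB
    rw [Matrix.det_mul, Matrix.det_nonsing_inv, Ring.inverse_eq_inv'] at this
    rw [← this]; ring
  have hdetB : B.det = Real.sqrt (S.det)⁻¹ := by
    rw [← hdetB_sq, Real.sqrt_sq hdetB_nonneg]
  have hdetB_pos : 0 < B.det := by
    rw [hdetB]; exact Real.sqrt_pos.mpr (inv_pos.mpr hSdet)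
  -- quadForm as dot product of image
  have hquad : ∀ x, quadForm S x = (B *ᵥ x) ⬝ᵥ (B *ᵥ x) := by
    intro x
    rw [quadForm, ← hBB, ← Matrix.mulVec_mulVec, Matrix.dotProduct_mulVec]
    nth_rewrite 1 [← hBsymm]
    rw [Matrix.vecMul_transpose]
  set T := Matrix.toLin' B with hT
  have hTapp : ∀ x, T x = B *ᵥ x := fun x => Matrix.toLin'_apply B x
  set E := {y : Fin n → ℝ | y ⬝ᵥ y ≤ t} with hE
  have hEmeas : MeasurableSet E := measurableSet_le continuous_selfDot.measurable measurable_const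
  have hDset : {x | quadForm S x ≤ t} = T ⁻¹' E := by
    ext x; simp [hE, hquad, hTapp]
  set c := Real.sqrt (((2 * Real.pi) ^ n * S.det)⁻¹) with hc
  set g : (Fin n → ℝ) → ℝ≥0∞ := fun y => ENNReal.ofReal (c * Real.exp (-(y ⬝ᵥ y) / 2)) with hg
  have hgmeas : Measurable g :=
    ENNReal.measurable_ofReal.comp ((continuous_const.mul
      (Real.continuous_exp.comp ((continuous_selfDot.neg).div_const 2))).measurable)
  have hTmeas : Measurable T := LinearMap.continuous_on_pi T |>.measurable
  have hmap : Measure.map T volume = ENNReal.ofReal |B.det⁻¹| • volume :=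
    Real.map_matrix_volume_pi_eq_smul_volume_pi hdetB_pos.ne'
  calc mvGaussian S {x | quadForm S x ≤ t}
      = ∫⁻ x in T ⁻¹' E, g (T x) ∂volume := by
        rw [mvGaussian_apply S (hDset ▸ hEmeas.preimage hTmeas), hDset]
        refine setLIntegral_congr_fun (hEmeas.preimage hTmeas) (fun x _ => ?_)
        rw [hg]; simp only [hquad, hTapp]; rfl
    _ = ∫⁻ y in E, g y ∂(Measure.map T volume) := (setLIntegral_map hEmeas hgmeas hTmeas).symm
    _ = ENNReal.ofReal |B.det⁻¹| * ∫⁻ y in E, g y ∂volume := by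
        rw [hmap, Measure.restrict_smul, lintegral_smul_measure, smul_eq_mul]
    _ = ∫⁻ y in E, ENNReal.ofReal (|B.det⁻¹| * (c * Real.exp (-(y ⬝ᵥ y) / 2))) ∂volume := by
        rw [← lintegral_const_mul' _ _ ENNReal.ofReal_ne_top]
        congr 1; ext y
        rw [hg, ENNReal.ofReal_mul (abs_nonneg _)]
    _ = _ := by
        have h2pi : (2 * Real.pi) ^ n ≠ 0 := pow_ne_zero _ (by positivity)
        have hconst : |B.det⁻¹| * c = Real.sqrt (((2 * Real.pi) ^ n)⁻¹) := by
          rw [abs_of_pos (inv_pos.mpr hdetB_pos), hdetB, ← Real.sqrt_inv, inv_inv, hc,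
            ← Real.sqrt_mul hSdet.le]
          congr 1
          field_simp
        refine setLIntegral_congr_fun hEmeas (fun y _ => ?_)
        rw [← mul_assoc, hconst]

lemma std_gauss_ball {n : ℕ} (hn : 1 ≤ n) {t : ℝ} (ht : 0 ≤ t) :
    (∫⁻ y in {y : Fin n → ℝ | y ⬝ᵥ y ≤ t},
        ENNReal.ofReal (Real.sqrt (((2 * Real.pi) ^ n)⁻¹) * Real.exp (-(y ⬝ᵥ y) / 2)) ∂volume)
      = ENNReal.ofReal (chiSqCDF n t) := by
  classical
  haveI : Nonempty (Fin n) := ⟨⟨0, hn⟩⟩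
  set c0 : ℝ := Real.sqrt (((2 * Real.pi) ^ n)⁻¹) with hc0
  have hc0pos : 0 < c0 := Real.sqrt_pos.mpr (by positivity)
  set e := (MeasurableEquiv.toLp 2 (Fin n → ℝ)).symm with he
  have vp : MeasurePreserving e volume volume :=
    EuclideanSpace.volume_preserving_symm_measurableEquiv_toLp (Fin n)
  set E := {y : Fin n → ℝ | y ⬝ᵥ y ≤ t} with hE
  have hEmeas : MeasurableSet E :=
    measurableSet_le continuous_selfDot.measurable measurable_const
  have hnorm : ∀ z : EuclideanSpace ℝ (Fin n), (e z) ⬝ᵥ (e z) = ‖z‖ ^ 2 := by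
    intro z
    rw [EuclideanSpace.norm_eq, Real.sq_sqrt (by positivity)]
    simp only [dotProduct, Real.norm_eq_abs, sq_abs]
    congr 1; ext i; rw [sq]; rfl
  have hpre : e ⁻¹' E = Metric.closedBall (0 : EuclideanSpace ℝ (Fin n)) (Real.sqrt t) := by
    ext z
    simp only [Set.mem_preimage, hE, Set.mem_setOf_eq, Metric.mem_closedBall,
      dist_zero_right, hnorm]
    rw [show ‖z‖ ^ 2 ≤ t ↔ ‖z‖ ≤ Real.sqrt t from (Real.le_sqrt (norm_nonneg z) ht).symm]
  set K := Metric.closedBall (0 : EuclideanSpace ℝ (Fin n)) (Real.sqrt t) with hK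
  set h : EuclideanSpace ℝ (Fin n) → ℝ := fun z => c0 * Real.exp (-‖z‖ ^ 2 / 2) with hh
  have hcont : Continuous h :=
    continuous_const.mul (Real.continuous_exp.comp
      (((continuous_norm.pow 2).neg).div_const 2))
  have hmeas : Measurable (fun y : Fin n → ℝ => ENNReal.ofReal (c0 * Real.exp (-(y ⬝ᵥ y) / 2))) :=
    ENNReal.measurable_ofReal.comp ((continuous_const.mul
      (Real.continuous_exp.comp ((continuous_selfDot.neg).div_const 2))).measurable)
  have step1 : (∫⁻ y in E, ENNReal.ofReal (c0 * Real.exp (-(y ⬝ᵥ y) / 2)) ∂volume)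
      = ∫⁻ z in K, ENNReal.ofReal (h z) ∂volume := by
    rw [← vp.map_eq, setLIntegral_map hEmeas hmeas e.measurable, hpre]
    refine setLIntegral_congr_fun (hpre ▸ hEmeas.preimage e.measurable) (fun z _ => ?_)
    rw [hnorm, hh]
  have hint : IntegrableOn h K volume :=
    hcont.continuousOn.integrableOn_compact (isCompact_closedBall _ _)
  have step2 : (∫⁻ z in K, ENNReal.ofReal (h z) ∂volume) = ENNReal.ofReal (∫ z in K, h z) :=
    (ofReal_integral_eq_lintegral_ofReal hint (ae_of_all _ fun z => by
      rw [hh]; positivity)).symm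
  set f0 : ℝ → ℝ := fun r => Set.indicator (Iic (Real.sqrt t))
    (fun r => c0 * Real.exp (-r ^ 2 / 2)) r with hf0
  have hf0val : ∀ r : ℝ, f0 r = if r ≤ Real.sqrt t then c0 * Real.exp (-r ^ 2 / 2) else 0 := by
    intro r
    rw [hf0]
    simp [Set.indicator_apply, mem_Iic]
  have step3 : (∫ z in K, h z) = ∫ z : EuclideanSpace ℝ (Fin n), f0 ‖z‖ := by
    rw [← integral_indicator (measurableSet_closedBall)]
    congr 1; ext z
    rw [hf0val]
    simp only [Set.indicator_apply, hK, Metric.mem_closedBall, dist_zero_right, hh]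
  haveI : Nontrivial (EuclideanSpace ℝ (Fin n)) := by
    refine nontrivial_of_ne (EuclideanSpace.single (⟨0, hn⟩ : Fin n) (1:ℝ)) 0 fun hcon => ?_
    have := congrArg norm hcon
    rw [EuclideanSpace.norm_single, norm_zero, norm_one] at this
    exact one_ne_zero this
  have step4 : (∫ z : EuclideanSpace ℝ (Fin n), f0 ‖z‖)
      = n • (volume (Metric.ball (0 : EuclideanSpace ℝ (Fin n)) 1)).toReal •
        ∫ r in Ioi (0:ℝ), r ^ (n - 1) • f0 r := by
    rw [integral_fun_norm_addHaar volume f0, finrank_euclideanSpace_fin, measureReal_def]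
  have step5 : (∫ r in Ioi (0:ℝ), r ^ (n - 1) • f0 r)
      = ∫ x in Ioo 0 (Real.sqrt t), x ^ (n - 1) * (c0 * Real.exp (-x ^ 2 / 2)) := by
    have : ∀ r : ℝ, r ^ (n - 1) • f0 r
        = Set.indicator (Iic (Real.sqrt t))
            (fun r => r ^ (n - 1) * (c0 * Real.exp (-r ^ 2 / 2))) r := by
      intro r
      rw [hf0val, smul_eq_mul]
      simp only [Set.indicator_apply, mem_Iic]
      by_cases hr : r ≤ Real.sqrt t
      · rw [if_pos hr, if_pos hr]
      · rw [if_neg hr, if_neg hr, mul_zero]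
    simp_rw [this]
    rw [setIntegral_indicator measurableSet_Iic, Ioi_inter_Iic, integral_Ioc_eq_integral_Ioo]
  -- substitution u = x^2
  have himg : (fun x : ℝ => x ^ 2) '' Ioo 0 (Real.sqrt t) = Ioo 0 t := by
    ext u
    constructor
    · rintro ⟨x, ⟨hx0, hxt⟩, rfl⟩
      refine ⟨by positivity, ?_⟩
      show x ^ 2 < t
      nlinarith [Real.sq_sqrt ht, mul_lt_mul'' hxt hxt hx0.le hx0.le]
    · rintro ⟨hu0, hut⟩
      exact ⟨Real.sqrt u, ⟨Real.sqrt_pos.mpr hu0, Real.sqrt_lt_sqrt hu0.le hut⟩,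
        Real.sq_sqrt hu0.le⟩
  have hderiv : ∀ x ∈ Ioo (0:ℝ) (Real.sqrt t),
      HasDerivWithinAt (fun x : ℝ => x ^ 2) (2 * x) (Ioo 0 (Real.sqrt t)) x := fun x _ => by
    simpa using (hasDerivAt_pow 2 x).hasDerivWithinAt
  have hinj : InjOn (fun x : ℝ => x ^ 2) (Ioo 0 (Real.sqrt t)) :=
    fun a ha b hb hab => by simp only at hab; nlinarith [ha.1, hb.1]
  set G : ℝ → ℝ := gammaPDFReal ((n:ℝ)/2) (1/2) with hG
  set c1 : ℝ := (1/2:ℝ) ^ ((n:ℝ)/2) / Real.Gamma ((n:ℝ)/2) with hc1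
  have step6 : (∫ u in Ioo 0 t, G u) = ∫ x in Ioo 0 (Real.sqrt t),
      (2 * c1) * (x ^ (n - 1) * Real.exp (-x ^ 2 / 2)) := by
    rw [← himg, integral_image_eq_integral_abs_deriv_smul measurableSet_Ioo hderiv hinj G]
    refine setIntegral_congr_fun measurableSet_Ioo fun x hx => ?_
    have hx0 : (0:ℝ) < x := hx.1
    rw [smul_eq_mul, hG, gammaPDFReal, if_pos (by positivity : (0:ℝ) ≤ x ^ 2),
      abs_of_pos (by linarith : (0:ℝ) < 2 * x)]
    have hxpow : ((x:ℝ) ^ 2) ^ ((n:ℝ)/2 - 1) = x ^ ((n:ℝ) - 2) := by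
      rw [← Real.rpow_natCast x 2, ← Real.rpow_mul hx0.le]
      congr 1
      push_cast
      ring
    have hxpow1 : x ^ ((n:ℝ) - 2) * x = (x:ℝ) ^ (n - 1 : ℕ) := by
      nth_rewrite 2 [← Real.rpow_one x]
      rw [← Real.rpow_add hx0, ← Real.rpow_natCast x (n-1), Nat.cast_sub hn, Nat.cast_one]
      congr 1
      ring
    rw [hxpow, hc1]
    have hexp : Real.exp (-(1/2 * x ^ 2)) = Real.exp (-x ^ 2 / 2) := by ring_nf
    rw [hexp]
    calc 2 * x * ((1/2:ℝ) ^ ((n:ℝ)/2) / Real.Gamma ((n:ℝ)/2) * x ^ ((n:ℝ) - 2)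
          * Real.exp (-x ^ 2 / 2))
        = 2 * ((1/2:ℝ) ^ ((n:ℝ)/2) / Real.Gamma ((n:ℝ)/2))
          * ((x ^ ((n:ℝ) - 2) * x) * Real.exp (-x ^ 2 / 2)) := by ring
      _ = _ := by rw [hxpow1]
  have hGnonneg : ∀ x, 0 ≤ G x := gammaPDFReal_nonneg (by positivity) (by norm_num)
  have hGint : Integrable G volume := by
    refine ⟨(measurable_gammaPDFReal _ _).aestronglyMeasurable, ?_⟩
    rw [hasFiniteIntegral_iff_ofReal (ae_of_all _ hGnonneg)]
    have : (∫⁻ x, ENNReal.ofReal (G x)) = 1 :=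
      lintegral_gammaPDF_eq_one (by positivity : (0:ℝ) < (n:ℝ)/2) (by norm_num)
    rw [this]
    exact ENNReal.one_lt_top
  have step7 : (∫ x in Iic t, G x) = ∫ u in Ioo 0 t, G u := by
    rw [← Iic_union_Ioc_eq_Iic ht,
      setIntegral_union (Iic_disjoint_Ioc le_rfl) measurableSet_Ioc
        hGint.integrableOn hGint.integrableOn]
    have h1 : (∫ x in Iic (0:ℝ), G x) = 0 := by
      rw [← setIntegral_congr_set Iio_ae_eq_Iic]
      rw [setIntegral_congr_fun measurableSet_Iio
        (fun x (hx : x < 0) => by rw [hG, gammaPDFReal, if_neg (not_le.mpr hx)])]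
      exact integral_zero _ _
    rw [h1, zero_add, integral_Ioc_eq_integral_Ioo]
  -- constants
  have hΓpos : 0 < Real.Gamma ((n:ℝ)/2) := Real.Gamma_pos_of_pos (by positivity)
  have hsqrtpow : ∀ x : ℝ, 0 ≤ x → Real.sqrt (x ^ n) = Real.sqrt x ^ n := by
    intro x hx
    rw [Real.sqrt_eq_rpow, ← Real.rpow_natCast x n, ← Real.rpow_mul hx, mul_one_div,
      Real.rpow_div_two_eq_sqrt _ hx, Real.rpow_natCast]
  set Vb := (volume (Metric.ball (0 : EuclideanSpace ℝ (Fin n)) 1)).toReal with hVbdef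
  have hVb : Vb = Real.sqrt Real.pi ^ n / Real.Gamma ((n:ℝ)/2 + 1) := by
    rw [hVbdef, EuclideanSpace.volume_ball, Fintype.card_fin]
    rw [ENNReal.ofReal_one, one_pow, one_mul, ENNReal.toReal_ofReal (by positivity)]
  have hconst : (n:ℝ) * Vb * c0 = 2 * c1 := by
    have h1 : c0 = (Real.sqrt 2 ^ n * Real.sqrt Real.pi ^ n)⁻¹ := by
      rw [hc0, Real.sqrt_inv, mul_pow, Real.sqrt_mul (by positivity : (0:ℝ) ≤ 2 ^ n),
        hsqrtpow 2 (by norm_num), hsqrtpow Real.pi Real.pi_pos.le]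
    have h2 : (1/2:ℝ) ^ ((n:ℝ)/2) = (Real.sqrt 2 ^ n)⁻¹ := by
      rw [show (1/2:ℝ) = 2⁻¹ by norm_num, Real.inv_rpow (by norm_num : (0:ℝ) ≤ 2)]
      congr 1
      rw [Real.rpow_div_two_eq_sqrt _ (by norm_num : (0:ℝ) ≤ 2), Real.rpow_natCast]
    have hΓ1 : Real.Gamma ((n:ℝ)/2 + 1) = ((n:ℝ)/2) * Real.Gamma ((n:ℝ)/2) :=
      Real.Gamma_add_one (by positivity)
    rw [h1, hVb, hΓ1, hc1, h2]
    have hsp : (0:ℝ) < Real.sqrt Real.pi ^ n := by positivity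
    have hs2 : (0:ℝ) < Real.sqrt 2 ^ n := by positivity
    have hnpos : (0:ℝ) < n := by exact_mod_cast hn
    field_simp
  -- assemble
  rw [step1, step2, step3, step4, step5]
  congr 1
  rw [chiSqCDF, gammaCDFReal_eq_integral (by positivity : (0:ℝ) < (n:ℝ)/2) (by norm_num), ← hG,
    step7, step6, integral_const_mul]
  have hpull : ∀ x : ℝ, x ^ (n - 1) * (c0 * Real.exp (-x ^ 2 / 2))
      = c0 * (x ^ (n - 1) * Real.exp (-x ^ 2 / 2)) := fun x => by ring
  simp_rw [hpull]
  rw [integral_const_mul, nsmul_eq_mul, smul_eq_mul]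
  linear_combination (∫ x in Ioo 0 (Real.sqrt t), x ^ (n - 1) * Real.exp (-x ^ 2 / 2)) * hconst


lemma mvGaussian_quadForm_le {n : ℕ} (hn : 1 ≤ n) {S : Matrix (Fin n) (Fin n) ℝ}
    (hS : S.PosDef) {t : ℝ} (ht : 0 ≤ t) :
    mvGaussian S {x | quadForm S x ≤ t} = ENNReal.ofReal (chiSqCDF n t) :=
  (gauss_change hS t).trans (std_gauss_ball hn ht)

lemma half_measures {n : ℕ} (hn : 1 ≤ n) {S : Matrix (Fin n) (Fin n) ℝ} (hS : S.PosDef)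
    (nh : Fin n → ℝ) (hnh : nh ≠ 0) {t p : ℝ} (ht : 0 ≤ t)
    (hD : chiSqCDF n t = p) :
    mvGaussian S {x | quadForm S x ≤ t ∧ 0 ≤ nh ⬝ᵥ x} = ENNReal.ofReal (p / 2) ∧
    mvGaussian S {x | quadForm S x ≤ t ∧ nh ⬝ᵥ x < 0} = ENNReal.ofReal (p / 2) := by
  set μ := mvGaussian S with hμ
  have hqm : Measurable (quadForm S) := (continuous_quadForm S).measurable
  have hdm : Measurable (fun x : Fin n → ℝ => nh ⬝ᵥ x) := (continuous_dotProd nh).measurable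
  set A := {x : Fin n → ℝ | quadForm S x ≤ t ∧ 0 ≤ nh ⬝ᵥ x} with hA
  set B := {x : Fin n → ℝ | quadForm S x ≤ t ∧ nh ⬝ᵥ x < 0} with hB
  set C := {x : Fin n → ℝ | quadForm S x ≤ t ∧ nh ⬝ᵥ x ≤ 0} with hC
  have hAm : MeasurableSet A :=
    (measurableSet_le hqm measurable_const).inter (measurableSet_le measurable_const hdm)
  have hBm : MeasurableSet B :=
    (measurableSet_le hqm measurable_const).inter (measurableSet_lt hdm measurable_const)
  have hCm : MeasurableSet C :=
    (measurableSet_le hqm measurable_const).inter (measurableSet_le hdm measurable_const)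
  have hAC : μ A = μ C := by
    have hpre : (fun x : Fin n → ℝ => -x) ⁻¹' C = A := by
      ext x
      simp only [hA, hC, Set.mem_preimage, Set.mem_setOf_eq, quadForm_neg,
        dotProduct_neg, neg_nonpos]
    rw [hμ, ← hpre, mvGaussian_neg_preimage S hCm]
  have hCB : μ C = μ B := by
    refine le_antisymm ?_ (measure_mono fun x hx => ⟨hx.1, hx.2.le⟩)
    have hsub : C ⊆ B ∪ {x | nh ⬝ᵥ x = 0} := by
      intro x hx
      rcases lt_or_eq_of_le hx.2 with h | h
      · exact Or.inl ⟨hx.1, h⟩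
      · exact Or.inr h
    calc μ C ≤ μ (B ∪ {x | nh ⬝ᵥ x = 0}) := measure_mono hsub
      _ ≤ μ B + μ {x | nh ⬝ᵥ x = 0} := measure_union_le _ _
      _ = μ B := by rw [hμ, mvGaussian_hyperplane S nh hnh, add_zero]
  have hunion : A ∪ B = {x | quadForm S x ≤ t} := by
    ext x
    simp only [hA, hB, Set.mem_union, Set.mem_setOf_eq]
    constructor
    · rintro (⟨h, _⟩ | ⟨h, _⟩) <;> exact h
    · intro h
      rcases le_or_gt 0 (nh ⬝ᵥ x) with h' | h'
      · exact Or.inl ⟨h, h'⟩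
      · exact Or.inr ⟨h, h'⟩
  have hdisj : Disjoint A B := by
    rw [Set.disjoint_left]
    rintro x ⟨_, h0⟩ ⟨_, h1⟩
    exact absurd h0 (not_le.mpr h1)
  have hsum : μ A + μ B = ENNReal.ofReal p := by
    rw [← measure_union hdisj hBm, hunion, hμ, mvGaussian_quadForm_le hn hS ht, hD]
  have hAB : μ A = μ B := hAC.trans hCB
  have h2 : (2:ℝ≥0∞) * μ A = ENNReal.ofReal p := by
    rw [two_mul]; nth_rewrite 2 [hAB]; exact hsum
  have hAval : μ A = ENNReal.ofReal p / 2 := by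
    exact (ENNReal.eq_div_iff (by norm_num) (by norm_num)).mpr h2
  have hhalf : ENNReal.ofReal p / 2 = ENNReal.ofReal (p / 2) := by
    rw [ENNReal.ofReal_div_of_pos (by norm_num), ENNReal.ofReal_ofNat]
  exact ⟨hAval.trans hhalf, (hAB.symm.trans hAval).trans hhalf⟩


/-- P(𝒪 ⊆ S_{ε₁} ∪ S_{ε₂}) ≥ 1 - (ε₁ + ε₂)/2 for the combined full- and half-ellipsoid
shadows of a convex obstacle O under Gaussian translation uncertainty. -/
theorem combined_shadow_prob {n : ℕ} (hn : 1 ≤ n)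
    (S : Matrix (Fin n) (Fin n) ℝ) (hS : S.PosDef)
    {Ω : Type*} [MeasurableSpace Ω] (P : Measure Ω) [IsProbabilityMeasure P]
    (d : Ω → Fin n → ℝ) (hd : Measurable d) (hlaw : P.map d = mvGaussian S)
    (O : Set (Fin n → ℝ)) (hO : Convex ℝ O)
    (nh : Fin n → ℝ) (hnh : nh ≠ 0)
    (φinv : ℝ → ℝ) (hφinv : ∀ p ∈ Ioo (0:ℝ) 1, chiSqCDF n (φinv p) = p)
    (hpos : ∀ p ∈ Ioo (0:ℝ) 1, 0 < φinv p)
    (ε₁ ε₂ : ℝ) (h1 : 0 < ε₂) (h2 : ε₂ ≤ ε₁) (h3 : ε₁ < 1) :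
    ENNReal.ofReal (1 - (ε₁ + ε₂) / 2) ≤
      P {ω | (fun x => x + d ω) '' O ⊆
        (O + {x : Fin n → ℝ | quadForm S x ≤ φinv (1 - ε₁)}) ∪
        (O + {x : Fin n → ℝ | quadForm S x ≤ φinv (1 - ε₂) ∧ 0 ≤ nh ⬝ᵥ x})} := by
  have hqm : Measurable (quadForm S) := (continuous_quadForm S).measurable
  have hdm : Measurable (fun x : Fin n → ℝ => nh ⬝ᵥ x) := (continuous_dotProd nh).measurable
  have hε₁ : (1 - ε₁) ∈ Ioo (0:ℝ) 1 := ⟨by linarith, by linarith⟩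
  have hε₂ : (1 - ε₂) ∈ Ioo (0:ℝ) 1 := ⟨by linarith, by linarith⟩
  set t₁ := φinv (1 - ε₁) with ht₁def
  set t₂ := φinv (1 - ε₂) with ht₂def
  have ht₁ : 0 ≤ t₁ := (hpos _ hε₁).le
  have ht₂ : 0 ≤ t₂ := (hpos _ hε₂).le
  set D₁ := {x : Fin n → ℝ | quadForm S x ≤ t₁} with hD₁
  set A₂ := {x : Fin n → ℝ | quadForm S x ≤ t₂ ∧ 0 ≤ nh ⬝ᵥ x} with hA₂
  set B₁ := {x : Fin n → ℝ | quadForm S x ≤ t₁ ∧ nh ⬝ᵥ x < 0} with hB₁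
  have hD₁m : MeasurableSet D₁ := measurableSet_le hqm measurable_const
  have hA₂m : MeasurableSet A₂ :=
    (measurableSet_le hqm measurable_const).inter (measurableSet_le measurable_const hdm)
  have hB₁val : mvGaussian S B₁ = ENNReal.ofReal ((1 - ε₁) / 2) :=
    (half_measures hn hS nh hnh ht₁ (hφinv _ hε₁)).2
  have hA₂val : mvGaussian S A₂ = ENNReal.ofReal ((1 - ε₂) / 2) :=
    (half_measures hn hS nh hnh ht₂ (hφinv _ hε₂)).1
  -- the event contains {ω | d ω ∈ D₁ ∪ A₂}
  have hsub : {ω | d ω ∈ D₁ ∪ A₂} ⊆ {ω | (fun x => x + d ω) '' O ⊆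
      (O + D₁) ∪ (O + A₂)} := by
    intro ω hω
    rintro y ⟨x, hxO, rfl⟩
    rcases hω with h | h
    · exact Or.inl (Set.add_mem_add hxO h)
    · exact Or.inr (Set.add_mem_add hxO h)
  refine le_trans ?_ (measure_mono hsub)
  have hUm : MeasurableSet (D₁ ∪ A₂) := hD₁m.union hA₂m
  have hpre : {ω | d ω ∈ D₁ ∪ A₂} = d ⁻¹' (D₁ ∪ A₂) := rfl
  rw [hpre, ← Measure.map_apply hd hUm, hlaw]
  -- lower bound by disjoint pieces
  have hdisj : Disjoint B₁ A₂ := by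
    rw [Set.disjoint_left]
    rintro x ⟨_, h0⟩ ⟨_, h1⟩
    exact absurd h1 (not_le.mpr h0)
  have hmono : B₁ ∪ A₂ ⊆ D₁ ∪ A₂ := by
    apply Set.union_subset_union_left
    exact fun x hx => hx.1
  calc ENNReal.ofReal (1 - (ε₁ + ε₂) / 2)
      = ENNReal.ofReal ((1 - ε₁) / 2 + (1 - ε₂) / 2) := by congr 1; ring
    _ = ENNReal.ofReal ((1 - ε₁) / 2) + ENNReal.ofReal ((1 - ε₂) / 2) :=
        ENNReal.ofReal_add (by linarith) (by linarith)
    _ = mvGaussian S B₁ + mvGaussian S A₂ := by rw [hB₁val, hA₂val]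
    _ = mvGaussian S (B₁ ∪ A₂) := (measure_union hdisj hA₂m).symm
    _ ≤ mvGaussian S (D₁ ∪ A₂) := measure_mono hmono
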